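/- arXiv:1812.09480 — 2 statements merged into one kernel-verified Lean document; each statement's English description precedes it below -/
import Mathlib

section
/- Let q > 1, A > 0, H > 0, and suppose |a_n| ≤ A·H^n / q^{n(n-1)/2} for all n ≥ 0. Then the entire function f(t) = ∑_{n≥0} a_n t^n satisfies the bound |f(t)| ≤ M · exp( (log|t|)² / (2 log q) + α·log|t| ) for all t ∈ ℂ \ {0}, for some constants M > 0 and α ∈ ℝ. -/
set_option maxHeartbeats 1000000 in
theorem stmt3 (q : ℝ) (hq : 1 < q) (a : ℕ → ℂ) (A H : ℝ) (hA : 0 < A) (hH : 0 < H)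
    (hbound : ∀ n : ℕ, ‖a n‖ ≤ A * H ^ n / q ^ (n * (n - 1) / 2)) :
    ∃ M > 0, ∃ α : ℝ, ∀ t : ℂ, t ≠ 0 →
      ‖∑' n : ℕ, a n * t ^ n‖ ≤
        M * Real.exp ((Real.log ‖t‖) ^ 2 / (2 * Real.log q) + α * Real.log ‖t‖) := by
  have hq0 : (0:ℝ) < q := lt_trans one_pos hq
  have hL : 0 < Real.log q := Real.log_pos hq
  set L := Real.log q with hLdef
  set c := Real.log (2*H) with hcdef
  set α := c/L + 3/2 with hαdef
  set C := max (c^2/(2*L) + 3*c/2 + L) (α^2*L/2) with hCdef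
  refine ⟨2*A*Real.exp C, by positivity, α, ?_⟩
  intro t ht
  set r := ‖t‖ with hrdef
  have hr : 0 < r := norm_pos_iff.mpr ht
  set x := Real.log r with hxdef
  set m : ℕ := ⌈(c+x)/L⌉₊ with hmdef
  set E : ℕ := m*(m+1)/2 with hEdef
  -- q^m ≥ 2*H*r
  have hqm : 2*H*r ≤ q^m := by
    have h1 : (c+x)/L ≤ (m:ℝ) := Nat.le_ceil _
    have h2 : c + x ≤ (m:ℝ) * L := by
      rw [div_le_iff₀ hL] at h1; linarith
    calc 2*H*r = Real.exp (c + x) := by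
          rw [hcdef, hxdef, Real.exp_add, Real.exp_log (by positivity), Real.exp_log hr]
      _ ≤ Real.exp ((m:ℝ)*L) := Real.exp_le_exp.mpr h2
      _ = q^m := by rw [Real.exp_nat_mul, hLdef, Real.exp_log hq0]
  -- termwise bound
  have hterm : ∀ n : ℕ, ‖a n * t ^ n‖ ≤ A * q^E * (1/2)^n := by
    intro n
    have he : m * n ≤ n * (n-1) / 2 + E := by
      have h2 : 2 * (m*n) ≤ m*(m+1) + n*(n-1) := by
        cases n with
        | zero => simp
        | succ k =>
          have hs : k + 1 - 1 = k := rfl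
          rw [hs]
          zify
          push_cast
          rcases le_or_gt (m:ℤ) k with hmk | hmk
          · nlinarith
          · nlinarith
      have hu : m*(m+1) % 2 = 0 := Nat.even_iff.mp (Nat.even_mul_succ_self m)
      have hv : n*(n-1) % 2 = 0 := by
        cases n with
        | zero => simp
        | succ k =>
          have hs : k + 1 - 1 = k := rfl
          rw [hs]
          simpa [Nat.mul_comm] using Nat.even_iff.mp (Nat.even_mul_succ_self k)
      rw [hEdef]
      omega
    have hkey : (H*r)^n / q^(n*(n-1)/2) ≤ q^E * (1/2)^n := by
      rw [div_le_iff₀ (by positivity)]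
      have hHr : H*r ≤ q^m/2 := by linarith
      calc (H*r)^n ≤ (q^m/2)^n := by
            apply pow_le_pow_left₀ (by positivity) hHr
        _ = q^(m*n) / 2^n := by rw [div_pow, ← pow_mul]
        _ ≤ q^(n*(n-1)/2 + E) / 2^n := by
            gcongr
            · exact le_of_lt hq
        _ = q^E * (1/2)^n * q^(n*(n-1)/2) := by
            rw [pow_add, one_div, inv_pow]; ring
    calc ‖a n * t ^ n‖ = ‖a n‖ * r^n := by rw [norm_mul, norm_pow]
      _ ≤ (A * H^n / q^(n*(n-1)/2)) * r^n :=
          mul_le_mul_of_nonneg_right (hbound n) (by positivity)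
      _ = A * ((H*r)^n / q^(n*(n-1)/2)) := by rw [mul_pow]; ring
      _ ≤ A * (q^E * (1/2)^n) :=
          mul_le_mul_of_nonneg_left hkey (le_of_lt hA)
      _ = A * q^E * (1/2)^n := by ring
  -- sum bound
  have hHS : HasSum (fun n : ℕ => A * q^E * (1/2:ℝ)^n) (A * q^E * 2) :=
    hasSum_geometric_two.mul_left _
  have hsum : ‖∑' n : ℕ, a n * t ^ n‖ ≤ A * q^E * 2 :=
    tsum_of_norm_bounded hHS hterm
  -- exponent bound
  have hEcast : ((E:ℝ)) ≤ (m:ℝ)*((m:ℝ)+1)/2 := by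
    rw [hEdef]
    calc ((↑(m*(m+1)/2) : ℝ)) ≤ (↑(m*(m+1)) : ℝ)/2 := Nat.cast_div_le
      _ = (m:ℝ)*((m:ℝ)+1)/2 := by push_cast; ring
  have hqE : (q:ℝ)^E ≤ Real.exp (L * ((m:ℝ)*((m:ℝ)+1)/2)) := by
    have h0 : (q:ℝ)^E = Real.exp ((E:ℝ) * L) := by
      rw [Real.exp_nat_mul, hLdef, Real.exp_log hq0]
    rw [h0]
    apply Real.exp_le_exp.mpr
    nlinarith
  have hmain : L * ((m:ℝ)*((m:ℝ)+1)/2) ≤ x^2/(2*L) + α*x + C := by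
    have hs0 : (0:ℝ) ≤ (m:ℝ) := Nat.cast_nonneg m
    rcases le_or_gt ((c+x)/L) 0 with ha | ha
    · have hm0 : m = 0 := Nat.ceil_eq_zero.mpr ha
      rw [hm0]
      have h1 : α^2*L/2 ≤ C := le_max_right _ _
      have h3 : x^2/(2*L) + α*x + α^2*L/2 = (x + α*L)^2/(2*L) := by
        field_simp; ring
      have h4 : (0:ℝ) ≤ (x + α*L)^2/(2*L) := by positivity
      push_cast
      nlinarith
    · have hs1 : (m:ℝ) < (c+x)/L + 1 := by
        rw [hmdef]
        exact Nat.ceil_lt_add_one (le_of_lt ha)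
      have step1 : L * ((m:ℝ)*((m:ℝ)+1)/2) ≤ L * (((c+x)/L+1)*((c+x)/L+2)/2) := by
        apply mul_le_mul_of_nonneg_left _ (le_of_lt hL)
        nlinarith
      have step2 : L * (((c+x)/L+1)*((c+x)/L+2)/2)
          = x^2/(2*L) + α*x + (c^2/(2*L)+3*c/2+L) := by
        rw [hαdef]
        field_simp
        ring
      have step3 : c^2/(2*L)+3*c/2+L ≤ C := le_max_left _ _
      calc L * ((m:ℝ)*((m:ℝ)+1)/2) ≤ L * (((c+x)/L+1)*((c+x)/L+2)/2) := step1
        _ = x^2/(2*L) + α*x + (c^2/(2*L)+3*c/2+L) := step2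
        _ ≤ x^2/(2*L) + α*x + C := by linarith
  calc ‖∑' n : ℕ, a n * t ^ n‖ ≤ A * q^E * 2 := hsum
    _ ≤ A * Real.exp (L * ((m:ℝ)*((m:ℝ)+1)/2)) * 2 := by
        have h6 := mul_le_mul_of_nonneg_left hqE hA.le
        linarith
    _ ≤ A * Real.exp (x^2/(2*L) + α*x + C) * 2 := by
        have h5 := Real.exp_le_exp.mpr hmain
        have h6 := mul_le_mul_of_nonneg_left h5 hA.le
        linarith
    _ = 2*A*Real.exp C * Real.exp (x^2/(2*L) + α*x) := by
        rw [show x^2/(2*L) + α*x + C = C + (x^2/(2*L) + α*x) by ring, Real.exp_add]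
        ring
end

section
/- Let q > 1 and let f(t) = ∑_{n≥0} a_n t^n be an entire function satisfying |f(t)| ≤ M · exp( (log|t|)² / (2 log q) + α·log|t| ) for all t ≠ 0, for some M > 0 and α ∈ ℝ. Then there exist A > 0 and H > 0 such that |a_n| ≤ A·H^n / q^{n(n-1)/2} for all n ≥ 0. -/
open Real in
lemma cauchy_est (f : ℂ → ℂ) (hf : Differentiable ℂ f) (r C : ℝ) (hr : 0 < r)
    (hb : ∀ z : ℂ, ‖z‖ = r → ‖f z‖ ≤ C) (n : ℕ) :
    ‖iteratedDeriv n f 0 / (n.factorial : ℂ)‖ ≤ C / r ^ n := by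
  have hC : 0 ≤ C := le_trans (norm_nonneg _) (hb r (by simp [abs_of_pos hr]))
  lift r to NNReal using hr.le with R
  have hR : (0 : NNReal) < R := by exact_mod_cast hr
  have h := (hf.differentiableOn (s := Metric.closedBall (0:ℂ) R)).hasFPowerSeriesOnBall hR
  have h1 : (n.factorial : ℂ) • (cauchyPowerSeries f 0 R n fun _ => (1:ℂ))
      = iteratedDeriv n f 0 := by
    rw [iteratedDeriv_eq_iteratedFDeriv, ← h.factorial_smul (1:ℂ) n]
    simp [Nat.smul_one_eq_cast]
  have h2 : iteratedDeriv n f 0 / (n.factorial : ℂ)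
      = cauchyPowerSeries f 0 R n fun _ => (1:ℂ) := by
    rw [← h1]
    field_simp
    exact mul_div_cancel_left₀ _ (by exact_mod_cast n.factorial_ne_zero)
  rw [h2]
  have h3 : ‖cauchyPowerSeries f 0 R n fun _ => (1:ℂ)‖ ≤ ‖cauchyPowerSeries f 0 R n‖ := by
    refine le_trans ((cauchyPowerSeries f 0 R n).le_opNorm _) ?_
    simp
  refine le_trans h3 <| le_trans (norm_cauchyPowerSeries_le f 0 R n) ?_
  have h4 : (∫ θ : ℝ in (0:ℝ)..2 * π, ‖f (circleMap 0 R θ)‖) ≤ ∫ _ : ℝ in (0:ℝ)..2 * π, C := by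
    apply intervalIntegral.integral_mono_on Real.two_pi_pos.le
    · exact ((hf.continuous.comp (continuous_circleMap 0 R)).norm).intervalIntegrable _ _
    · exact intervalIntegrable_const
    · intro θ _
      exact hb _ (by simp [abs_of_pos hr])
  have h5 : (∫ _ : ℝ in (0:ℝ)..2 * π, C) = 2 * π * C := by simp [mul_comm]
  rw [h5] at h4
  have h6 : (2 * π)⁻¹ * (∫ θ : ℝ in (0:ℝ)..2 * π, ‖f (circleMap 0 R θ)‖) ≤ C := by
    calc (2 * π)⁻¹ * _ ≤ (2 * π)⁻¹ * (2 * π * C) := by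
          apply mul_le_mul_of_nonneg_left h4 (by positivity)
      _ = C := by field_simp
  have h7 : |(R : ℝ)|⁻¹ ^ n = ((R:ℝ) ^ n)⁻¹ := by
    rw [abs_of_pos hr, inv_pow]
  rw [h7, div_eq_mul_inv]
  exact mul_le_mul_of_nonneg_right h6 (by positivity)

theorem stmt4 (q : ℝ) (hq : 1 < q) (f : ℂ → ℂ) (hf : Differentiable ℂ f)
    (M : ℝ) (hM : 0 < M) (α : ℝ)
    (hbound : ∀ t : ℂ, t ≠ 0 →
      ‖f t‖ ≤ M * Real.exp ((Real.log ‖t‖) ^ 2 / (2 * Real.log q) + α * Real.log ‖t‖)) :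
    ∃ A > 0, ∃ H > 0, ∀ n : ℕ,
      ‖iteratedDeriv n f 0 / (n.factorial : ℂ)‖ ≤ A * H ^ n / q ^ (n * (n - 1) / 2) := by
  have hq0 : (0:ℝ) < q := lt_trans one_pos hq
  have hL : 0 < Real.log q := Real.log_pos hq
  set L := Real.log q with hLdef
  refine ⟨M * q ^ (-(α^2)/2 : ℝ), by positivity, q ^ (α - 1/2 : ℝ),
    Real.rpow_pos_of_pos hq0 _, fun n => ?_⟩
  set r : ℝ := q ^ (((n:ℝ) - α) : ℝ) with hrdef
  have hr : 0 < r := Real.rpow_pos_of_pos hq0 _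
  have hlogr : Real.log r = ((n:ℝ) - α) * L := Real.log_rpow hq0 _
  have step1 : ‖iteratedDeriv n f 0 / (n.factorial : ℂ)‖ ≤
      M * Real.exp ((Real.log r) ^ 2 / (2 * L) + α * Real.log r) / r ^ n := by
    apply cauchy_est f hf r _ hr
    intro z hz
    have hz0 : z ≠ 0 := by
      intro h; rw [h] at hz; simp at hz; exact hr.ne' hz.symm
    have := hbound z hz0
    rwa [hz] at this
  refine step1.trans (le_of_eq ?_)
  -- cast of n*(n-1)/2
  have hdvd : 2 ∣ n * (n - 1) := by
    rcases Nat.even_or_odd n with h | h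
    · exact Dvd.dvd.mul_right h.two_dvd _
    · rcases n with _ | m
      · simp
      · simp only [Nat.succ_sub_one]
        exact Dvd.dvd.mul_left (Nat.Odd.sub_odd h odd_one).two_dvd _
  have hk : ((n * (n - 1) / 2 : ℕ) : ℝ) = ((n:ℝ)^2 - n) / 2 := by
    rw [Nat.cast_div hdvd (by norm_num)]
    rcases n with _ | m
    · simp
    · push_cast [Nat.succ_sub_one]
      ring
  -- express everything through exp
  have hrn : r ^ n = Real.exp (L * (((n:ℝ) - α) * n)) := by
    rw [hrdef, ← Real.rpow_natCast (q ^ (((n:ℝ) - α) : ℝ)) n, ← Real.rpow_mul hq0.le,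
      Real.rpow_def_of_pos hq0]
  have hA : q ^ (-(α^2)/2 : ℝ) = Real.exp (L * (-(α^2)/2)) := Real.rpow_def_of_pos hq0 _
  have hH : (q ^ (α - 1/2 : ℝ)) ^ n = Real.exp (L * ((α - 1/2) * n)) := by
    rw [← Real.rpow_natCast (q ^ (α - 1/2 : ℝ)) n, ← Real.rpow_mul hq0.le,
      Real.rpow_def_of_pos hq0]
  have hQ : (q : ℝ) ^ (n * (n - 1) / 2 : ℕ) = Real.exp (L * (((n:ℝ)^2 - n) / 2)) := by
    rw [← Real.rpow_natCast q (n * (n - 1) / 2), Real.rpow_def_of_pos hq0, hk]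
  rw [hrn, hA, hH, hQ, hlogr, mul_div_assoc M, ← Real.exp_sub,
    mul_assoc M, ← Real.exp_add, mul_div_assoc M, ← Real.exp_sub]
  congr 1
  field_simp
  ring
end
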